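/- Let m ≥ 2, K ∈ ℝ^{m×m}, η ∈ ℝ^m, a > 0, b > 0, and fix j ∈ {1,…,m−1} and α > max{0, 1−a, 1−b}. For x ∈ Δ_{−m}° write x_m := 1 − Σ_{i=1}^{m−1} x_i, regard x = (x_1,…,x_m) ∈ ℝ^m, and define the profiled score s_j(x) = −(κ_{·,j}^⊤ x^a) x_j^{a−1} + (κ_{·,m}^⊤ x^a) x_m^{a−1} + η_j x_j^{b−1} − η_m x_m^{b−1}, where κ_{·,j} denotes the j-th column of K and x^a is the componentwise power. Then ∫_{Δ_{−m}°} min{x_j, x_m}^α · s_j(x)² dx < ∞. -/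

import Mathlib

/-! On the simplex every coordinate lies in `(0, 1]`, so the inner sums `κ_{·,k}^⊤ x^a` are bounded
and `|s_j| ≲ x_j^{a-1} + x_m^{a-1} + x_j^{b-1} + x_m^{b-1}`. Bounding `min{x_j, x_m}^α` by `x_j^α`
or `x_m^α` term by term dominates the integrand by powers `x_j^e`, `x_m^e` with
`e = α + 2(a-1)` or `α + 2(b-1)`, and `e > -1` by the assumption on `α`. Such powers are integrable
on the simplex: `x_j^e` already on the unit cube, and `x_m` is carried to `x_j` by the
volume-preserving affine involution of the simplex exchanging these two barycentric coordinates. -/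

open MeasureTheory Matrix Finset

/-- The open simplex `Δ_{-m}°` in `ℝ^n` (where `m = n+1`). -/
def simplexInt (n : ℕ) : Set (Fin n → ℝ) :=
  {x | (∀ i, 0 < x i) ∧ ∑ i, x i < 1}

/-- Profile the last coordinate: send `x ∈ ℝ^n` to `(x, 1 - ∑ x) ∈ ℝ^{n+1}`. -/
noncomputable def fullVec {n : ℕ} (x : Fin n → ℝ) : Fin (n + 1) → ℝ :=
  Fin.snoc x (1 - ∑ i, x i)

/-- The profiled score `s_j(x)` of the `a`-`b` model on the simplex (substituting
`x_m = 1 - ∑_{i<m} x_i`), evaluated at a full vector `X ∈ ℝ^{n+1}`. -/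
noncomputable def scoreFn {n : ℕ} (K : Matrix (Fin (n + 1)) (Fin (n + 1)) ℝ)
    (η : Fin (n + 1) → ℝ) (a b : ℝ) (j : Fin n) (X : Fin (n + 1) → ℝ) : ℝ :=
  -(∑ i, K i j.castSucc * X i ^ a) * X j.castSucc ^ (a - 1)
    + (∑ i, K i (Fin.last n) * X i ^ a) * X (Fin.last n) ^ (a - 1)
    + η j.castSucc * X j.castSucc ^ (b - 1)
    - η (Fin.last n) * X (Fin.last n) ^ (b - 1)

open Set Real

@[simp]
lemma fullVec_castSucc {n : ℕ} (x : Fin n → ℝ) (i : Fin n) : fullVec x i.castSucc = x i :=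
  Fin.snoc_castSucc ..

@[simp]
lemma fullVec_last {n : ℕ} (x : Fin n → ℝ) : fullVec x (Fin.last n) = 1 - ∑ i, x i :=
  Fin.snoc_last ..

lemma continuous_fullVec (n : ℕ) : Continuous (fullVec : (Fin n → ℝ) → Fin (n + 1) → ℝ) := by
  unfold fullVec; fun_prop

lemma fullVec_mem_Ioc {n : ℕ} {x : Fin n → ℝ} (hx : x ∈ simplexInt n) (i : Fin (n + 1)) :
    fullVec x i ∈ Set.Ioc 0 1 := by
  induction i using Fin.lastCases with
  | last =>
    have : 0 ≤ ∑ i, x i := sum_nonneg fun i _ => (hx.1 i).le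
    simp only [fullVec_last, Set.mem_Ioc]
    constructor <;> linarith [hx.2]
  | cast k =>
    have : x k ≤ ∑ i, x i := single_le_sum (fun i _ => (hx.1 i).le) (mem_univ k)
    simp only [fullVec_castSucc]
    exact ⟨hx.1 k, by linarith [hx.2]⟩

lemma measurableSet_simplexInt (n : ℕ) : MeasurableSet (simplexInt n) := by
  simp only [simplexInt, ofPred_and, ofPred_forall]
  exact (MeasurableSet.iInter fun i => measurableSet_lt measurable_const (measurable_pi_apply i))
    |>.inter (measurableSet_lt (by fun_prop) measurable_const)

lemma simplexInt_subset_univ_pi_Ioo (n : ℕ) : simplexInt n ⊆ univ.pi fun _ => Ioo 0 1 :=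
  fun _ hx i _ =>
    ⟨hx.1 i, (single_le_sum (fun k _ => (hx.1 k).le) (mem_univ i)).trans_lt hx.2⟩

lemma integrableOn_univ_pi_Ioo_rpow_apply {ι : Type*} [Fintype ι] (k : ι) {c : ℝ} (hc : -1 < c) :
    IntegrableOn (fun x : ι → ℝ => x k ^ c) (univ.pi fun _ => Ioo 0 1) := by
  classical
  have h := Integrable.fintype_prod (μ := fun _ => volume.restrict (Ioo (0 : ℝ) 1))
    (f := fun i t => if i = k then t ^ c else 1) fun i => by
      split_ifs
      exacts [(intervalIntegral.integrableOn_Ioo_rpow_iff one_pos).2 hc, integrable_const _]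
  rw [IntegrableOn, volume_pi, Measure.restrict_pi_pi]
  simpa using h

lemma integrableOn_simplexInt_rpow_apply {n : ℕ} (k : Fin n) {c : ℝ} (hc : -1 < c) :
    IntegrableOn (fun x : Fin n → ℝ => x k ^ c) (simplexInt n) :=
  (integrableOn_univ_pi_Ioo_rpow_apply k hc).mono_set (simplexInt_subset_univ_pi_Ioo n)

section SwapLastCoord

variable {ι : Type*} [Fintype ι] [DecidableEq ι]

def swapLastCoord (i : ι) (x : ι → ℝ) : ι → ℝ :=
  Function.update x i (1 - ∑ k, x k)

lemma sum_swapLastCoord (i : ι) (x : ι → ℝ) : ∑ k, swapLastCoord i x k = 1 - x i := by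
  rw [swapLastCoord, sum_update_of_mem (mem_univ i), ← erase_eq,
    sum_erase_eq_sub (mem_univ i)]
  ring

lemma measurePreserving_swapLastCoord (i : ι) :
    MeasurePreserving (swapLastCoord i) volume volume := by
  set M : Matrix ι ι ℝ := (1 : Matrix ι ι ℝ).updateRow i fun _ => -1 with hM_def
  have hdet : M.det = -1 := by
    have hrow : (fun _ => (-1 : ℝ)) = ∑ k, (-1 : ℝ) • (1 : Matrix ι ι ℝ) k := by
      ext l; simp [Matrix.one_apply]
    rw [hM_def, hrow, det_updateRow_sum]
    simp
  have hM : Measure.map (toLin' M) volume = volume := by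
    rw [Real.map_matrix_volume_pi_eq_smul_volume_pi (by simp [hdet]), hdet]
    simp
  have hswap : swapLastCoord i = (Pi.single i 1 + ·) ∘ toLin' M := by
    ext x k
    rcases eq_or_ne k i with rfl | hk
    · simp only [swapLastCoord, Function.update_self, Function.comp_apply, toLin'_apply,
        Pi.add_apply, Pi.single_eq_same, mulVec, dotProduct, updateRow_self, neg_mul, one_mul,
        sum_neg_distrib, M]
      ring
    · simp [swapLastCoord, M, hk, Matrix.one_apply, mulVec, dotProduct]
  have hmeas : Measurable (toLin' M) := (toLin' M).continuous_of_finiteDimensional.measurable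
  rw [hswap]
  exact ⟨(measurable_const_add _).comp hmeas, by
    rw [← Measure.map_map (measurable_const_add _) hmeas, hM, map_add_left_eq_self]⟩

end SwapLastCoord

lemma preimage_swapLastCoord_simplexInt {n : ℕ} (i : Fin n) :
    swapLastCoord i ⁻¹' simplexInt n = simplexInt n := by
  ext x
  change (∀ k, 0 < swapLastCoord i x k) ∧ ∑ k, swapLastCoord i x k < 1 ↔ x ∈ simplexInt n
  rw [sum_swapLastCoord]
  constructor
  · rintro ⟨hpos, hsum⟩
    have hlast := hpos i
    simp only [swapLastCoord, Function.update_self] at hlast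
    refine ⟨fun k => ?_, by linarith⟩
    rcases eq_or_ne k i with rfl | hk
    · linarith
    · simpa [swapLastCoord, hk] using hpos k
  · rintro ⟨hpos, hsum⟩
    refine ⟨fun k => ?_, by linarith [hpos i]⟩
    rcases eq_or_ne k i with rfl | hk
    · simpa [swapLastCoord] using hsum
    · simpa [swapLastCoord, hk] using hpos k

lemma integrableOn_simplexInt_rpow_last {n : ℕ} (i : Fin n) {c : ℝ} (hc : -1 < c) :
    IntegrableOn (fun x : Fin n → ℝ => (1 - ∑ k, x k) ^ c) (simplexInt n) := by
  have hmp := (measurePreserving_swapLastCoord i).restrict_preimage (measurableSet_simplexInt n)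
  rw [preimage_swapLastCoord_simplexInt] at hmp
  simpa [IntegrableOn, Function.comp_def, swapLastCoord] using
    hmp.integrable_comp_of_integrable (integrableOn_simplexInt_rpow_apply i hc)

lemma abs_sum_mul_rpow_le {ι : Type*} [Fintype ι] (c : ι → ℝ) {X : ι → ℝ}
    (hX : ∀ i, X i ∈ Set.Ioc 0 1) {a : ℝ} (ha : 0 ≤ a) :
    |∑ i, c i * X i ^ a| ≤ ∑ i, |c i| := by
  refine (abs_sum_le_sum_abs _ _).trans (sum_le_sum fun i _ => ?_)
  rw [abs_mul, abs_of_nonneg (rpow_nonneg (hX i).1.le a)]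
  exact mul_le_of_le_one_right (abs_nonneg _) (rpow_le_one (hX i).1.le (hX i).2 ha)

lemma exists_abs_scoreFn_le {n : ℕ} (K : Matrix (Fin (n + 1)) (Fin (n + 1)) ℝ)
    (η : Fin (n + 1) → ℝ) {a : ℝ} (b : ℝ) (ha : 0 ≤ a) (j : Fin n) :
    ∃ M, ∀ X : Fin (n + 1) → ℝ, (∀ i, X i ∈ Set.Ioc 0 1) →
      |scoreFn K η a b j X| ≤ M * (X j.castSucc ^ (a - 1) + X (Fin.last n) ^ (a - 1) +
        X j.castSucc ^ (b - 1) + X (Fin.last n) ^ (b - 1)) := by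
  set A := ∑ i, |K i j.castSucc|
  set B := ∑ i, |K i (Fin.last n)|
  refine ⟨A + B + |η j.castSucc| + |η (Fin.last n)|, fun X hX => ?_⟩
  have hA : |∑ i, K i j.castSucc * X i ^ a| ≤ A := abs_sum_mul_rpow_le _ hX ha
  have hB : |∑ i, K i (Fin.last n) * X i ^ a| ≤ B := abs_sum_mul_rpow_le _ hX ha
  have hA0 : 0 ≤ A := sum_nonneg fun i _ => abs_nonneg _
  have hB0 : 0 ≤ B := sum_nonneg fun i _ => abs_nonneg _
  have hpow : ∀ i (e : ℝ), 0 ≤ X i ^ e := fun i e => rpow_nonneg (hX i).1.le e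
  have hη₁ := abs_nonneg (η j.castSucc)
  have hη₂ := abs_nonneg (η (Fin.last n))
  calc |scoreFn K η a b j X|
      ≤ |-(∑ i, K i j.castSucc * X i ^ a) * X j.castSucc ^ (a - 1)| +
          |(∑ i, K i (Fin.last n) * X i ^ a) * X (Fin.last n) ^ (a - 1)| +
          |η j.castSucc * X j.castSucc ^ (b - 1)| + |η (Fin.last n) * X (Fin.last n) ^ (b - 1)| :=
        (abs_sub _ _).trans (add_le_add_left (abs_add_three _ _ _) _)
    _ = |∑ i, K i j.castSucc * X i ^ a| * X j.castSucc ^ (a - 1) +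
          |∑ i, K i (Fin.last n) * X i ^ a| * X (Fin.last n) ^ (a - 1) +
          |η j.castSucc| * X j.castSucc ^ (b - 1) +
          |η (Fin.last n)| * X (Fin.last n) ^ (b - 1) := by
        simp only [abs_mul, abs_neg, abs_of_nonneg (hpow _ _)]
    _ ≤ _ := by
      rw [mul_add, mul_add, mul_add]
      gcongr <;> first | apply hpow | linarith

lemma min_rpow_mul_sq_le {u v α c d M s : ℝ} (hu : 0 < u) (hv : 0 < v) (hα : 0 ≤ α)
    (hs : |s| ≤ M * (u ^ c + v ^ c + u ^ d + v ^ d)) :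
    min u v ^ α * s ^ 2 ≤
      4 * M ^ 2 * (u ^ (α + 2 * c) + v ^ (α + 2 * c) + u ^ (α + 2 * d) + v ^ (α + 2 * d)) := by
  have weight : ∀ {y : ℝ} (e : ℝ), 0 < y → min u v ≤ y →
      min u v ^ α * (y ^ e) ^ 2 ≤ y ^ (α + 2 * e) := by
    intro y e hy hwy
    rw [← rpow_natCast, ← rpow_mul hy.le, rpow_add hy, Nat.cast_ofNat, mul_comm e]
    gcongr
  have hsq : s ^ 2 ≤ 4 * M ^ 2 * ((u ^ c) ^ 2 + (v ^ c) ^ 2 + (u ^ d) ^ 2 + (v ^ d) ^ 2) := by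
    calc s ^ 2 = |s| ^ 2 := (sq_abs s).symm
      _ ≤ (M * (u ^ c + v ^ c + u ^ d + v ^ d)) ^ 2 := pow_le_pow_left₀ (abs_nonneg s) hs 2
      _ = M ^ 2 * (u ^ c + v ^ c + u ^ d + v ^ d) ^ 2 := mul_pow ..
      _ ≤ M ^ 2 * (4 * ((u ^ c) ^ 2 + (v ^ c) ^ 2 + (u ^ d) ^ 2 + (v ^ d) ^ 2)) := by
        gcongr
        nlinarith [sq_nonneg (u ^ c - v ^ c), sq_nonneg (u ^ c - u ^ d), sq_nonneg (u ^ c - v ^ d),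
          sq_nonneg (v ^ c - u ^ d), sq_nonneg (v ^ c - v ^ d), sq_nonneg (u ^ d - v ^ d)]
      _ = _ := by ring
  calc min u v ^ α * s ^ 2
      ≤ min u v ^ α * (4 * M ^ 2 * ((u ^ c) ^ 2 + (v ^ c) ^ 2 + (u ^ d) ^ 2 + (v ^ d) ^ 2)) := by
        gcongr
    _ = 4 * M ^ 2 * (min u v ^ α * (u ^ c) ^ 2 + min u v ^ α * (v ^ c) ^ 2 +
        min u v ^ α * (u ^ d) ^ 2 + min u v ^ α * (v ^ d) ^ 2) := by ring
    _ ≤ _ := by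
      gcongr
      · exact weight c hu (min_le_left u v)
      · exact weight c hv (min_le_right u v)
      · exact weight d hu (min_le_left u v)
      · exact weight d hv (min_le_right u v)

theorem weighted_score_square_integrable_general (n : ℕ)
    (K : Matrix (Fin (n + 1)) (Fin (n + 1)) ℝ) (η : Fin (n + 1) → ℝ)
    (a b : ℝ) (ha : 0 < a) (hb : 0 < b)
    (j : Fin n) (α : ℝ) (hα : max 0 (max (1 - a) (1 - b)) < α) :
    IntegrableOn (fun x : Fin n → ℝ =>
      min (fullVec x j.castSucc) (fullVec x (Fin.last n)) ^ α *
        (scoreFn K η a b j (fullVec x)) ^ 2) (simplexInt n) := by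
  obtain ⟨hα0, hαa, hαb⟩ : 0 < α ∧ 1 - a < α ∧ 1 - b < α := by simpa only [max_lt_iff] using hα
  obtain ⟨M, hM⟩ := exists_abs_scoreFn_le K η b ha.le j
  have hdom : IntegrableOn (fun x : Fin n → ℝ => 4 * M ^ 2 *
      (x j ^ (α + 2 * (a - 1)) + (1 - ∑ k, x k) ^ (α + 2 * (a - 1)) +
        x j ^ (α + 2 * (b - 1)) + (1 - ∑ k, x k) ^ (α + 2 * (b - 1)))) (simplexInt n) :=
    ((((integrableOn_simplexInt_rpow_apply j (by linarith)).add
      (integrableOn_simplexInt_rpow_last j (by linarith))).add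
      (integrableOn_simplexInt_rpow_apply j (by linarith))).add
      (integrableOn_simplexInt_rpow_last j (by linarith))).const_mul _
  refine hdom.mono' ?_ ?_
  · have := (continuous_fullVec n).measurable
    unfold scoreFn
    fun_prop
  · filter_upwards [ae_restrict_mem (measurableSet_simplexInt n)] with x hx
    have hX := fullVec_mem_Ioc hx
    have hbound := min_rpow_mul_sq_le (hX j.castSucc).1 (hX (Fin.last n)).1 hα0.le (hM _ hX)
    have := (hX j.castSucc).1
    have := (hX (Fin.last n)).1
    rw [Real.norm_of_nonneg (by positivity)]
    simpa only [fullVec_castSucc, fullVec_last] using hbound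

/-- Weighted integrability of the squared profiled score for `a, b > 0` and
weight exponent `α > max{0, 1-a, 1-b}`. -/
theorem weighted_score_square_integrable (n : ℕ) (hn : 1 ≤ n)
    (K : Matrix (Fin (n + 1)) (Fin (n + 1)) ℝ) (η : Fin (n + 1) → ℝ)
    (a b : ℝ) (ha : 0 < a) (hb : 0 < b)
    (j : Fin n) (α : ℝ) (hα : max 0 (max (1 - a) (1 - b)) < α) :
    IntegrableOn (fun x : Fin n → ℝ =>
      min (fullVec x j.castSucc) (fullVec x (Fin.last n)) ^ α *
        (scoreFn K η a b j (fullVec x)) ^ 2) (simplexInt n) :=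
  weighted_score_square_integrable_general n K η a b ha hb j α hα
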